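/- With ψ(θ) = μθ + (σ²/2)θ² - aθ/(θ+c) having distinct roots -β₂ < -c < -β₁ < 0 < Φ of ψ(θ) = q, and W_q(x) = e^{-β₂ x}/ψ'(-β₂) + e^{-β₁ x}/ψ'(-β₁) + e^{Φ x}/ψ'(Φ), the Laplace transform identity ∫₀^∞ e^{-θx} W_q(x) dx = 1/(ψ(θ) - q) holds for all θ > Φ. -/

import Mathlib

/-! Clearing the denominator `θ + c` turns `ψ θ = q` into a cubic equation with leading
coefficient `σ² / 2`, so the three given roots factor it completely:
`ψ θ - q = (σ² / 2) (θ + β₂) (θ + β₁) (θ - Φ) / (θ + c)`. At a root `r` the derivative `ψ' r` is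
therefore the product of the other two linear factors over `r + c`, and `1 / (ψ θ - q)` splits
into the partial fractions `∑ 1 / (ψ' r (θ - r))`. Each of these is the Laplace transform of
`e^{r x} / ψ' r`, which converges as soon as `θ > r`. -/

open Real Set MeasureTheory
open Filter Topology

theorem quadratic_coeffs_eq_zero_of_three_roots {A B C r s t : ℝ} (hrs : r ≠ s) (hrt : r ≠ t)
    (hst : s ≠ t) (hr : A * r ^ 2 + B * r + C = 0) (hs : A * s ^ 2 + B * s + C = 0)
    (ht : A * t ^ 2 + B * t + C = 0) : A = 0 ∧ B = 0 ∧ C = 0 := by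
  have hrs' : A * (r + s) + B = 0 :=
    (mul_eq_zero.1 (by linear_combination hr - hs : (r - s) * (A * (r + s) + B) = 0)).resolve_left
      (sub_ne_zero.2 hrs)
  have hrt' : A * (r + t) + B = 0 :=
    (mul_eq_zero.1 (by linear_combination hr - ht : (r - t) * (A * (r + t) + B) = 0)).resolve_left
      (sub_ne_zero.2 hrt)
  have hA : A = 0 :=
    (mul_eq_zero.1 (by linear_combination hrs' - hrt' : (s - t) * A = 0)).resolve_left
      (sub_ne_zero.2 hst)
  have hB : B = 0 := by linear_combination hrs' - (r + s) * hA
  exact ⟨hA, hB, by linear_combination hr - r ^ 2 * hA - r * hB⟩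

theorem cubic_eq_mul_of_three_roots {a b c d r s t : ℝ} (hrs : r ≠ s) (hrt : r ≠ t) (hst : s ≠ t)
    (hr : a * r ^ 3 + b * r ^ 2 + c * r + d = 0) (hs : a * s ^ 3 + b * s ^ 2 + c * s + d = 0)
    (ht : a * t ^ 3 + b * t ^ 2 + c * t + d = 0) (x : ℝ) :
    a * x ^ 3 + b * x ^ 2 + c * x + d = a * (x - r) * (x - s) * (x - t) := by
  obtain ⟨hA, hB, hC⟩ := quadratic_coeffs_eq_zero_of_three_roots
    (A := b + a * (r + s + t)) (B := c - a * (r * s + r * t + s * t)) (C := d + a * (r * s * t))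
    hrs hrt hst (by linear_combination hr) (by linear_combination hs) (by linear_combination ht)
  linear_combination x ^ 2 * hA + x * hB + hC

theorem eq_mul_div_add_of_three_roots {ψ : ℝ → ℝ} {μ k a c q r s t : ℝ}
    (hψ : ∀ θ, θ ≠ -c → ψ θ = μ * θ + k * θ ^ 2 - a * θ / (θ + c))
    (hrs : r ≠ s) (hrt : r ≠ t) (hst : s ≠ t) (hrc : r ≠ -c) (hsc : s ≠ -c) (htc : t ≠ -c)
    (hr : ψ r = q) (hs : ψ s = q) (ht : ψ t = q) (θ : ℝ) (hθ : θ ≠ -c) :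
    ψ θ = k * (θ - r) * (θ - s) * (θ - t) / (θ + c) + q := by
  have cubic_root : ∀ x, x ≠ -c → ψ x = q →
      k * x ^ 3 + (μ + k * c) * x ^ 2 + (μ * c - a - q) * x - q * c = 0 := by
    intro x hx hψx
    have hx' : x + c ≠ 0 := fun h => hx (by linarith)
    rw [hψ x hx] at hψx
    field_simp at hψx
    linear_combination hψx
  have hfactor := cubic_eq_mul_of_three_roots hrs hrt hst (cubic_root r hrc hr)
    (cubic_root s hsc hs) (cubic_root t htc ht) θ
  have hθ' : θ + c ≠ 0 := fun h => hθ (by linarith)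
  rw [hψ θ hθ]
  field_simp
  linear_combination hfactor

theorem hasDerivAt_sub_mul_add {g : ℝ → ℝ} {r : ℝ} (q : ℝ)
    (hg : DifferentiableAt ℝ g r) : HasDerivAt (fun θ => (θ - r) * g θ + q) (g r) r := by
  simpa using (((hasDerivAt_id r).sub_const r).mul hg.hasDerivAt).add_const q

theorem deriv_eq_of_forall_eq_mul_div_add {ψ : ℝ → ℝ} {k c q r s t : ℝ}
    (hψ : ∀ θ, θ ≠ -c → ψ θ = k * (θ - r) * (θ - s) * (θ - t) / (θ + c) + q) (hrc : r ≠ -c) :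
    deriv ψ r = k * (r - s) * (r - t) / (r + c) := by
  have hrc' : r + c ≠ 0 := fun h => hrc (by linarith)
  have hg : DifferentiableAt ℝ (fun θ => k * (θ - s) * (θ - t) / (θ + c)) r := by
    fun_prop (disch := exact hrc')
  have hψ_near : ψ =ᶠ[𝓝 r] fun θ => (θ - r) * (k * (θ - s) * (θ - t) / (θ + c)) + q := by
    filter_upwards [eventually_ne_nhds hrc] with θ hθ
    rw [hψ θ hθ]
    ring
  rw [hψ_near.deriv_eq, (hasDerivAt_sub_mul_add q hg).deriv]

theorem deriv_at_roots_of_forall_eq_mul_div_add {ψ : ℝ → ℝ} {k c q r s t : ℝ}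
    (hψ : ∀ θ, θ ≠ -c → ψ θ = k * (θ - r) * (θ - s) * (θ - t) / (θ + c) + q)
    (hrc : r ≠ -c) (hsc : s ≠ -c) (htc : t ≠ -c) :
    deriv ψ r = k * (r - s) * (r - t) / (r + c) ∧ deriv ψ s = k * (s - r) * (s - t) / (s + c) ∧
      deriv ψ t = k * (t - r) * (t - s) / (t + c) := by
  have hψs : ∀ θ, θ ≠ -c → ψ θ = k * (θ - s) * (θ - r) * (θ - t) / (θ + c) + q :=
    fun θ hθ => (hψ θ hθ).trans (by ring)
  have hψt : ∀ θ, θ ≠ -c → ψ θ = k * (θ - t) * (θ - r) * (θ - s) / (θ + c) + q :=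
    fun θ hθ => (hψ θ hθ).trans (by ring)
  exact ⟨deriv_eq_of_forall_eq_mul_div_add hψ hrc,
    deriv_eq_of_forall_eq_mul_div_add hψs hsc, deriv_eq_of_forall_eq_mul_div_add hψt htc⟩

theorem one_div_mul_div_eq_partial_fractions {k c θ r s t : ℝ} (hrs : r ≠ s) (hrt : r ≠ t) (hst : s ≠ t)
    (hrc : r ≠ -c) (hsc : s ≠ -c) (htc : t ≠ -c) (hθr : θ ≠ r) (hθs : θ ≠ s) (hθt : θ ≠ t) :
    1 / (k * (θ - r) * (θ - s) * (θ - t) / (θ + c)) =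
      1 / (k * (r - s) * (r - t) / (r + c) * (θ - r)) +
      1 / (k * (s - r) * (s - t) / (s + c) * (θ - s)) +
      1 / (k * (t - r) * (t - s) / (t + c) * (θ - t)) := by
  rcases eq_or_ne k 0 with rfl | hk
  · simp -- both sides are `1 / 0 = 0`
  have := sub_ne_zero.2 hrs
  have := sub_ne_zero.2 hrt
  have := sub_ne_zero.2 hst
  have := sub_ne_zero.2 hθr
  have := sub_ne_zero.2 hθs
  have := sub_ne_zero.2 hθt
  have : r + c ≠ 0 := fun h => hrc (by linarith)
  have : s + c ≠ 0 := fun h => hsc (by linarith)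
  have : t + c ≠ 0 := fun h => htc (by linarith)
  field_simp
  ring

theorem exp_neg_mul_mul_exp (θ r x : ℝ) : exp (-θ * x) * exp (r * x) = exp ((r - θ) * x) := by
  rw [← exp_add]
  ring_nf

theorem integrableOn_exp_neg_mul_mul_exp {θ r : ℝ} (hr : r < θ) :
    IntegrableOn (fun x => exp (-θ * x) * exp (r * x)) (Ioi 0) := by
  simpa only [exp_neg_mul_mul_exp] using integrableOn_exp_mul_Ioi (sub_neg.2 hr) 0

theorem integral_exp_neg_mul_mul_exp {θ r : ℝ} (hr : r < θ) :
    ∫ x in Ioi 0, exp (-θ * x) * exp (r * x) = 1 / (θ - r) := by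
  simp only [exp_neg_mul_mul_exp]
  rw [integral_exp_mul_Ioi (sub_neg.2 hr), mul_zero, exp_zero, neg_div, ← div_neg, neg_sub]

theorem integrableOn_and_integral_exp_neg_mul_mul_sum {θ r₁ r₂ r₃ : ℝ} (d₁ d₂ d₃ : ℝ)
    (h₁ : r₁ < θ) (h₂ : r₂ < θ) (h₃ : r₃ < θ) :
    IntegrableOn (fun x => exp (-θ * x) * (exp (r₁ * x) / d₁ + exp (r₂ * x) / d₂ +
        exp (r₃ * x) / d₃)) (Ioi 0) ∧
      ∫ x in Ioi 0, exp (-θ * x) * (exp (r₁ * x) / d₁ + exp (r₂ * x) / d₂ + exp (r₃ * x) / d₃) =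
        1 / (d₁ * (θ - r₁)) + 1 / (d₂ * (θ - r₂)) + 1 / (d₃ * (θ - r₃)) := by
  have hsplit : (fun x => exp (-θ * x) * (exp (r₁ * x) / d₁ + exp (r₂ * x) / d₂ +
      exp (r₃ * x) / d₃)) = fun x => exp (-θ * x) * exp (r₁ * x) / d₁ +
        exp (-θ * x) * exp (r₂ * x) / d₂ + exp (-θ * x) * exp (r₃ * x) / d₃ := by
    ext x
    simp only [mul_add, mul_div_assoc]
  have i₁ := (integrableOn_exp_neg_mul_mul_exp h₁).div_const d₁
  have i₂ := (integrableOn_exp_neg_mul_mul_exp h₂).div_const d₂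
  have i₃ := (integrableOn_exp_neg_mul_mul_exp h₃).div_const d₃
  have i₁₂ : IntegrableOn (fun x => exp (-θ * x) * exp (r₁ * x) / d₁ +
      exp (-θ * x) * exp (r₂ * x) / d₂) (Ioi 0) := i₁.add i₂
  rw [hsplit]
  refine ⟨i₁₂.add i₃, ?_⟩
  rw [integral_add i₁₂ i₃, integral_add i₁ i₂, integral_div, integral_div, integral_div,
    integral_exp_neg_mul_mul_exp h₁, integral_exp_neg_mul_mul_exp h₂,
    integral_exp_neg_mul_mul_exp h₃, div_div, div_div, div_div, mul_comm (θ - r₁),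
    mul_comm (θ - r₂), mul_comm (θ - r₃)]

theorem scale_function_laplace_transform_general (μ σ a c q β₁ β₂ Φ : ℝ) (ψ : ℝ → ℝ)
    (hψ : ∀ θ : ℝ, θ ≠ -c → ψ θ = μ * θ + σ ^ 2 / 2 * θ ^ 2 - a * θ / (θ + c))
    (h21 : -β₂ < -c) (h1c : -c < -β₁) (h10 : -β₁ < 0) (hΦ : 0 < Φ)
    (hr2 : ψ (-β₂) = q) (hr1 : ψ (-β₁) = q) (hrΦ : ψ Φ = q) :
    ∀ θ : ℝ, Φ < θ →
      MeasureTheory.IntegrableOn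
        (fun x : ℝ => Real.exp (-θ * x) *
          (Real.exp (-β₂ * x) / deriv ψ (-β₂) + Real.exp (-β₁ * x) / deriv ψ (-β₁) +
            Real.exp (Φ * x) / deriv ψ Φ)) (Set.Ioi 0) ∧
      (∫ x in Set.Ioi (0 : ℝ),
          Real.exp (-θ * x) *
            (Real.exp (-β₂ * x) / deriv ψ (-β₂) + Real.exp (-β₁ * x) / deriv ψ (-β₁) +
              Real.exp (Φ * x) / deriv ψ Φ)) = 1 / (ψ θ - q) := by
  intro θ hθ
  have h21' : -β₂ ≠ -β₁ := by linarith
  have h2Φ : -β₂ ≠ Φ := by linarith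
  have h1Φ : -β₁ ≠ Φ := by linarith
  have h2c : -β₂ ≠ -c := h21.ne
  have h1c' : -β₁ ≠ -c := h1c.ne'
  have hΦc : Φ ≠ -c := by linarith
  have hθ1 : -β₁ < θ := by linarith
  have hθ2 : -β₂ < θ := by linarith
  have hfactor := eq_mul_div_add_of_three_roots hψ h21' h2Φ h1Φ h2c h1c' hΦc hr2 hr1 hrΦ
  obtain ⟨hd2, hd1, hdΦ⟩ := deriv_at_roots_of_forall_eq_mul_div_add hfactor h2c h1c' hΦc
  rw [hd2, hd1, hdΦ, hfactor θ (by linarith), add_sub_cancel_right,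
    one_div_mul_div_eq_partial_fractions h21' h2Φ h1Φ h2c h1c' hΦc hθ2.ne' hθ1.ne' hθ.ne']
  exact integrableOn_and_integral_exp_neg_mul_mul_sum _ _ _ hθ2 hθ1 hθ

/-- Laplace transform of the scale function: ∫₀^∞ e^{-θx} W_q(x) dx = 1/(ψ(θ) - q)
for θ > Φ. -/
theorem scale_function_laplace_transform (μ σ a c q β₁ β₂ Φ : ℝ) (hσ : 0 ≤ σ) (ha : 0 < a)
    (hc : 0 < c) (hq : 0 < q) (ψ : ℝ → ℝ)
    (hψ : ∀ θ : ℝ, θ ≠ -c → ψ θ = μ * θ + σ ^ 2 / 2 * θ ^ 2 - a * θ / (θ + c))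
    (h21 : -β₂ < -c) (h1c : -c < -β₁) (h10 : -β₁ < 0) (hΦ : 0 < Φ)
    (hr2 : ψ (-β₂) = q) (hr1 : ψ (-β₁) = q) (hrΦ : ψ Φ = q)
    (hd2 : deriv ψ (-β₂) ≠ 0) (hd1 : deriv ψ (-β₁) ≠ 0) (hdΦ : deriv ψ Φ ≠ 0) :
    ∀ θ : ℝ, Φ < θ →
      MeasureTheory.IntegrableOn
        (fun x : ℝ => Real.exp (-θ * x) *
          (Real.exp (-β₂ * x) / deriv ψ (-β₂) + Real.exp (-β₁ * x) / deriv ψ (-β₁) +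
            Real.exp (Φ * x) / deriv ψ Φ)) (Set.Ioi 0) ∧
      (∫ x in Set.Ioi (0 : ℝ),
          Real.exp (-θ * x) *
            (Real.exp (-β₂ * x) / deriv ψ (-β₂) + Real.exp (-β₁ * x) / deriv ψ (-β₁) +
              Real.exp (Φ * x) / deriv ψ Φ)) = 1 / (ψ θ - q) :=
  scale_function_laplace_transform_general μ σ a c q β₁ β₂ Φ ψ hψ h21 h1c h10 hΦ hr2 hr1 hrΦ
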